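/- arXiv:nlin/0603017 — 2 statements merged into one kernel-verified Lean document; each statement's English description precedes it below -/
import Mathlib

section
/- With Λ_u(x;y) as above, C_N(u) Λ_u(x;y) = (−i)^{N+1} Λ_{u−iħ}(x;y), where C_N(u) is the (2,1) entry of the monodromy matrix acting as a differential operator on the x-variables. -/
/-!
The recursion `T_{m+1} = L_{m+1} T_m` gives `C_N = -e^{x_N} A_{N-1}` and
`A_{m+1} = (u - p_{m+1}) A_m - e^{x_m - x_{m+1}} A_{m-1}`. For `1 ≤ m < N` the momentum
`p_m` acts on `Λ_u` as multiplication by `u + i (e^{x_m - y_m} - e^{y_{m-1} - x_m})`, and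
commutes with `e^{S_{m-1}}`, `S_m = Σ_{j ≤ m} (x_j - y_j)`. Hence, by induction,
`A_m Λ_u = (-i)^m e^{S_m} Λ_u` for `m < N`: the `e^{y_{m-1} - x_m}` part of `p_m` cancels the
second term of the recursion.
Finally `e^{x_N + S_{N-1}} Λ_u = Λ_{u - iħ}`.
-/

noncomputable section

open Complex

/-- Complex-valued functions of countably many real coordinates `x 1, x 2, …`. -/
abbrev TodaFun := (ℕ → ℝ) → ℂ

/-- The momentum operator of the `n`-th particle, `p_n = −iħ ∂/∂x_n`. -/
def pOp (hbar : ℝ) (n : ℕ) (f : TodaFun) : TodaFun :=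
  fun x => (-Complex.I * hbar) * deriv (fun t : ℝ => f (Function.update x n t)) (x n)

/-- The Lax matrix `L_n(u) = [[u − p_n, e^{−x_n}], [−e^{x_n}, 0]]`,
as a 2×2 matrix of operators on functions. -/
def Lax (hbar : ℝ) (u : ℂ) (n : ℕ) : Fin 2 → Fin 2 → (TodaFun → TodaFun) :=
  ![![fun f x => u * f x - pOp hbar n f x, fun f x => (Real.exp (-(x n)) : ℂ) * f x],
    ![fun f x => (-Real.exp (x n) : ℝ) * f x, fun _ _ => 0]]

/-- Product of 2×2 matrices of operators: `(AB)_{ij} f = A_{i0}(B_{0j} f) + A_{i1}(B_{1j} f)`. -/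
def mulOp (A B : Fin 2 → Fin 2 → (TodaFun → TodaFun)) : Fin 2 → Fin 2 → (TodaFun → TodaFun) :=
  fun i j f x => A i 0 (B 0 j f) x + A i 1 (B 1 j f) x

/-- The monodromy matrix `T_N(u) = L_N(u) ⋯ L_1(u)`, with `T_0 = Id`. -/
def Tmat (hbar : ℝ) (u : ℂ) : ℕ → (Fin 2 → Fin 2 → (TodaFun → TodaFun))
  | 0 => ![![fun f => f, fun _ _ => 0], ![fun _ _ => 0, fun f => f]]
  | (n + 1) => mulOp (Lax hbar u (n + 1)) (Tmat hbar u n)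

/-- `A_N(u)`: the (1,1) entry of the monodromy matrix. -/
def Aop (hbar : ℝ) (u : ℂ) (N : ℕ) : TodaFun → TodaFun := Tmat hbar u N 0 0

/-- `B_N(u)`: the (1,2) entry of the monodromy matrix. -/
def Bop (hbar : ℝ) (u : ℂ) (N : ℕ) : TodaFun → TodaFun := Tmat hbar u N 0 1

/-- `C_N(u)`: the (2,1) entry of the monodromy matrix. -/
def Cop (hbar : ℝ) (u : ℂ) (N : ℕ) : TodaFun → TodaFun := Tmat hbar u N 1 0

/-- `D_N(u)`: the (2,2) entry of the monodromy matrix. -/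
def Dop (hbar : ℝ) (u : ℂ) (N : ℕ) : TodaFun → TodaFun := Tmat hbar u N 1 1

/-- The kernel
`Λ_u(x;y) = exp{(i/ħ)u(Σ_{n=1}^N x_n − Σ_{n=1}^{N−1} y_n)
  − (1/ħ)Σ_{n=1}^{N−1}(e^{y_n−x_{n+1}} + e^{x_n−y_n})}`. -/
def LamKer (hbar : ℝ) (N : ℕ) (u : ℂ) (y : ℕ → ℝ) : TodaFun :=
  fun x => Complex.exp (Complex.I * u / hbar
    * (((∑ n ∈ Finset.Icc 1 N, x n) - ∑ n ∈ Finset.Icc 1 (N - 1), y n : ℝ) : ℂ)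
    - ((1 / hbar) * ∑ n ∈ Finset.Icc 1 (N - 1),
        (Real.exp (y n - x (n + 1)) + Real.exp (x n - y n)) : ℝ))

open Finset Function

theorem hasDerivAt_sum_update {ι F : Type*} [DecidableEq ι] [NormedAddCommGroup F]
    [NormedSpace ℝ F] (s : Finset ι) (φ : ι → ℝ → F) (x : ι → ℝ) (m : ι) {φ' : F}
    (hφ : HasDerivAt (φ m) φ' (x m)) :
    HasDerivAt (fun t => ∑ n ∈ s, φ n (update x m t n))
      (if m ∈ s then φ' else 0) (x m) := by
  rw [← sum_ite_eq' s m (fun _ => φ')]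
  refine HasDerivAt.fun_sum fun n _ => ?_
  by_cases hn : n = m
  · subst hn
    simpa using hφ
  · simpa [hn, update_of_ne hn] using hasDerivAt_const (x m) (φ n (x n))

theorem sum_Icc_exp_potential_eq (N : ℕ) (hN : 1 ≤ N) (y z : ℕ → ℝ) :
    ∑ n ∈ Icc 1 (N - 1), (Real.exp (y n - z (n + 1)) + Real.exp (z n - y n))
      = ∑ n ∈ Icc 2 N, Real.exp (y (n - 1) - z n)
        + ∑ n ∈ Icc 1 (N - 1), Real.exp (z n - y n) := by
  have hIcc : Icc 2 N = (Icc 1 (N - 1)).map (addRightEmbedding 1) := by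
    rw [map_add_right_Icc]
    congr 1
    omega
  rw [sum_add_distrib, hIcc, sum_map]
  simp

theorem hasDerivAt_LamKer_update (hbar : ℝ) (N : ℕ) (u : ℂ) (y x : ℕ → ℝ) {m : ℕ}
    (hm : m ∈ Icc 1 N) :
    HasDerivAt (fun t => LamKer hbar N u y (update x m t))
      ((I * u / hbar - ((1 / hbar * ((if m ∈ Icc 1 (N - 1) then Real.exp (x m - y m) else 0)
          - (if m ∈ Icc 2 N then Real.exp (y (m - 1) - x m) else 0)) : ℝ) : ℂ))
        * LamKer hbar N u y x) (x m) := by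
  have hN : 1 ≤ N := ((mem_Icc.1 hm).1).trans (mem_Icc.1 hm).2
  have hlin : HasDerivAt (fun t => ∑ n ∈ Icc 1 N, update x m t n - ∑ n ∈ Icc 1 (N - 1), y n)
      1 (x m) := by
    simpa [hm] using
      (hasDerivAt_sum_update (Icc 1 N) (fun _ t => t) x m (hasDerivAt_id _)).sub_const
        (∑ n ∈ Icc 1 (N - 1), y n)
  have hleft :
      HasDerivAt (fun t => Real.exp (y (m - 1) - t)) (-Real.exp (y (m - 1) - x m)) (x m) := by
    simpa using ((hasDerivAt_id (x m)).const_sub (y (m - 1))).exp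
  have hright : HasDerivAt (fun t => Real.exp (t - y m)) (Real.exp (x m - y m)) (x m) := by
    simpa using ((hasDerivAt_id (x m)).sub_const (y m)).exp
  have hexp := ((hasDerivAt_sum_update (Icc 2 N) (fun n t => Real.exp (y (n - 1) - t)) x m
    hleft).fun_add (hasDerivAt_sum_update (Icc 1 (N - 1)) (fun n t => Real.exp (t - y n)) x m
      hright)).const_mul (1 / hbar)
  have := ((hlin.ofReal_comp.const_mul (I * u / hbar)).fun_sub hexp.ofReal_comp).cexp
  convert this using 1
  · funext t
    simp only [LamKer, sum_Icc_exp_potential_eq N hN]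
  · rw [mul_comm]
    congr 1
    · simp only [LamKer, update_eq_self, sum_Icc_exp_potential_eq N hN]
    · split_ifs <;> push_cast <;> ring

theorem pOp_LamKer {hbar : ℝ} (hh : hbar ≠ 0) (N : ℕ) (u : ℂ) (y x : ℕ → ℝ) {m : ℕ}
    (hm : m ∈ Icc 1 N) :
    pOp hbar m (LamKer hbar N u y) x
      = (u + I * ((if m ∈ Icc 1 (N - 1) then Real.exp (x m - y m) else 0)
          - (if m ∈ Icc 2 N then Real.exp (y (m - 1) - x m) else 0) : ℝ))
        * LamKer hbar N u y x := by
  rw [pOp, (hasDerivAt_LamKer_update hbar N u y x hm).deriv]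
  have hC : (hbar : ℂ) ≠ 0 := ofReal_ne_zero.mpr hh
  push_cast
  field_simp
  linear_combination (-(u * LamKer hbar N u y x)) * I_mul_I

theorem pOp_mul_left_of_update_eq (hbar : ℝ) (n : ℕ) (g f : TodaFun) (x : ℕ → ℝ)
    (hg : ∀ t, g (update x n t) = g x) :
    pOp hbar n (fun z => g z * f z) x = g x * pOp hbar n f x := by
  simp only [pOp, hg, deriv_const_mul_field']
  ring

theorem Aop_zero (hbar : ℝ) (u : ℂ) (f : TodaFun) : Aop hbar u 0 f = f := rfl

theorem Cop_zero (hbar : ℝ) (u : ℂ) (f : TodaFun) (x : ℕ → ℝ) :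
    Cop hbar u 0 f x = 0 := rfl

theorem Aop_succ (hbar : ℝ) (u : ℂ) (m : ℕ) (f : TodaFun) (x : ℕ → ℝ) :
    Aop hbar u (m + 1) f x
      = u * Aop hbar u m f x - pOp hbar (m + 1) (Aop hbar u m f) x
        + Real.exp (-x (m + 1)) * Cop hbar u m f x := rfl

theorem Cop_succ (hbar : ℝ) (u : ℂ) (m : ℕ) (f : TodaFun) (x : ℕ → ℝ) :
    Cop hbar u (m + 1) f x = -Real.exp (x (m + 1)) * Aop hbar u m f x := by
  simp [Cop, Aop, Tmat, mulOp, Lax]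

theorem Aop_LamKer {hbar : ℝ} (hh : hbar ≠ 0) (N : ℕ) (u : ℂ) (y : ℕ → ℝ) (m : ℕ)
    (hm : m < N) :
    Aop hbar u m (LamKer hbar N u y)
      = fun x => (-I) ^ m * Real.exp (∑ j ∈ Icc 1 m, (x j - y j)) * LamKer hbar N u y x := by
  induction m using Nat.twoStepInduction with
  | zero => funext x; simp [Aop_zero]
  | one =>
    funext x
    rw [Aop_succ, Aop_zero, Cop_zero, pOp_LamKer hh N u y x (by simp; omega),
      if_pos (by simp; omega), if_neg (by simp), Icc_self, sum_singleton]
    push_cast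
    ring
  | more n ih ih' =>
    funext x
    rw [Aop_succ, Cop_succ, ih (by omega), ih' (by omega),
      pOp_mul_left_of_update_eq hbar (n + 2) _ _ x ?_,
      pOp_LamKer hh N u y x (by simp; omega)]
    · have hS₁ := sum_Icc_succ_top (show 1 ≤ n + 1 by omega) fun j => x j - y j
      have hS₂ := sum_Icc_succ_top (show 1 ≤ n + 2 by omega) fun j => x j - y j
      simp only [show n + 2 ∈ Icc 1 (N - 1) by simp; omega,
        show n + 2 ∈ Icc 2 N by simp; omega, if_true, show n + 2 - 1 = n + 1 by omega,
        hS₂, hS₁, Real.exp_add, Real.exp_sub, Real.exp_neg]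
      push_cast
      field_simp
      ring_nf
      rw [I_sq]
      ring
    · intro t
      congr 3
      exact sum_congr rfl fun j hj => by
        rw [update_of_ne (by simp at hj; omega)]

theorem LamKer_sub_I_mul {hbar : ℝ} (hh : hbar ≠ 0) (N : ℕ) (u : ℂ) (y x : ℕ → ℝ) :
    LamKer hbar N (u - I * hbar) y x
      = Complex.exp ((∑ n ∈ Icc 1 N, x n) - ∑ n ∈ Icc 1 (N - 1), y n : ℝ)
        * LamKer hbar N u y x := by
  have hC : (hbar : ℂ) ≠ 0 := ofReal_ne_zero.mpr hh
  rw [LamKer, LamKer, ← Complex.exp_add]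
  congr 1
  field_simp
  linear_combination
    (-(hbar : ℂ) * (((∑ n ∈ Icc 1 N, x n) - ∑ n ∈ Icc 1 (N - 1), y n : ℝ) : ℂ))
      * I_mul_I

theorem Cop_shifts_LamKer (hbar : ℝ) (hh : 0 < hbar) (u : ℂ) (N : ℕ) (hN : 1 ≤ N)
    (y : ℕ → ℝ) :
    ∀ x : ℕ → ℝ,
      Cop hbar u N (LamKer hbar N u y) x
        = (-Complex.I) ^ (N + 1) * LamKer hbar N (u - Complex.I * hbar) y x := by
  intro x
  obtain ⟨k, rfl⟩ : ∃ k, N = k + 1 := ⟨N - 1, by omega⟩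
  rw [Cop_succ, Aop_LamKer hh.ne' (k + 1) u y k (by omega), LamKer_sub_I_mul hh.ne',
    sum_Icc_succ_top (by omega : 1 ≤ k + 1), Nat.add_sub_cancel, add_sub_right_comm,
    ← sum_sub_distrib]
  push_cast
  rw [Complex.exp_add]
  ring_nf
  rw [I_sq]
  ring

end
end

section
/- With Λ_u(x;y) as above, B_N(u) Λ_u(x;y) = i^{N−1} Λ_{u+iħ}(x;y). -/
/-! On a product `g · Λ_u` with `g` independent of `x_n`, the operator `u - p_n` acts as
multiplication by `a_n = i (e^{y_{n-1} - x_n} - e^{x_n - y_n})` (first term absent for `n = 1`,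
second for `n = N`). Hence `B_N Λ_u = β_N Λ_u`, where `(β_n, δ_n)` is the first column of the
product of the function matrices `M_n = [[a_n, e^{-x_n}], [-e^{x_n}, 0]]`. The covector
`(i, e^{-y_n})` (replaced by `(i, 0)` at `n = N`) satisfies
`(i, e^{-y_{n+1}}) M_{n+1} = i e^{y_n - x_{n+1}} (i, e^{-y_n})`, so `i β_n + e^{-y_n} δ_n`
telescopes to `i^n e^{Σ_{k<n} y_k - Σ_{k≤n} x_k}`; at `n = N` this gives
`β_N = i^{N-1} e^{-(Σ x - Σ y)}`, exactly the factor turning `Λ_u` into `Λ_{u+iħ}`. -/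

noncomputable section

open Complex

theorem Bop_succ (hbar : ℝ) (u : ℂ) (n : ℕ) (f : TodaFun) (x : ℕ → ℝ) :
    Bop hbar u (n + 1) f x = u * Bop hbar u n f x - pOp hbar (n + 1) (Bop hbar u n f) x
      + (Real.exp (-x (n + 1)) : ℂ) * Dop hbar u n f x := by
  simp [Bop, Dop, Tmat, mulOp, Lax]

theorem Dop_succ (hbar : ℝ) (u : ℂ) (n : ℕ) (f : TodaFun) (x : ℕ → ℝ) :
    Dop hbar u (n + 1) f x = -(Real.exp (x (n + 1)) : ℂ) * Bop hbar u n f x := by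
  simp [Bop, Dop, Tmat, mulOp, Lax]

theorem pOp_mul_of_update_eq (hbar : ℝ) (n : ℕ) (g f : TodaFun) (x : ℕ → ℝ)
    (hg : ∀ t, g (Function.update x n t) = g x) :
    pOp hbar n (fun z => g z * f z) x = g x * pOp hbar n f x := by
  simp only [pOp, hg, deriv_const_mul_field]
  ring

/-- If `u - p_k` acts on `f` as multiplication by `a k`, then on multiples of `f` by functions
of `x_1, …, x_{k-1}` the Lax matrix `L_k(u)` acts as `[[a k, e^{-x_k}], [-e^{x_k}, 0]]`;
`laxCoeff a x n` is the first column of the product of these matrices for `k = n, …, 1`. -/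
def laxCoeff (a : ℕ → TodaFun) (x : ℕ → ℝ) : ℕ → ℂ × ℂ
  | 0 => (0, 1)
  | n + 1 => (a (n + 1) x * (laxCoeff a x n).1 + Real.exp (-x (n + 1)) * (laxCoeff a x n).2,
      -Real.exp (x (n + 1)) * (laxCoeff a x n).1)

section laxCoeff

variable {a : ℕ → TodaFun}

theorem laxCoeff_update (ha : ∀ k j, k < j → ∀ x t, a k (Function.update x j t) = a k x)
    (x : ℕ → ℝ) (j : ℕ) (t : ℝ) : ∀ n < j, laxCoeff a (Function.update x j t) n = laxCoeff a x n
  | 0, _ => rfl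
  | n + 1, hn => by
    simp only [laxCoeff, laxCoeff_update ha x j t n (by omega), ha _ _ hn,
      Function.update_of_ne (show n + 1 ≠ j by omega)]

theorem Bop_Dop_eq_laxCoeff_mul (hbar : ℝ) (u : ℂ) (N : ℕ) (f : TodaFun)
    (hf : ∀ n, 1 ≤ n → n ≤ N → ∀ x, u * f x - pOp hbar n f x = a n x * f x)
    (ha : ∀ k j, k < j → ∀ x t, a k (Function.update x j t) = a k x) :
    ∀ n ≤ N, ∀ x, Bop hbar u n f x = (laxCoeff a x n).1 * f x ∧
      Dop hbar u n f x = (laxCoeff a x n).2 * f x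
  | 0, _, x => by simp [Bop, Dop, Tmat, laxCoeff]
  | n + 1, hn, x => by
    have ih := Bop_Dop_eq_laxCoeff_mul hbar u N f hf ha n (by omega)
    have hB : Bop hbar u n f = fun z => (laxCoeff a z n).1 * f z := funext fun z => (ih z).1
    have hp :
        pOp hbar (n + 1) (Bop hbar u n f) x = (laxCoeff a x n).1 * pOp hbar (n + 1) f x := by
      rw [hB, pOp_mul_of_update_eq]
      intro t
      rw [laxCoeff_update ha x (n + 1) t n (by omega)]
    rw [Bop_succ, Dop_succ, hp, (ih x).1, (ih x).2]
    simp only [laxCoeff]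
    constructor
    · linear_combination (laxCoeff a x n).1 * hf (n + 1) (by omega) hn x
    · ring

end laxCoeff

def lamKerCoeff (N : ℕ) (y : ℕ → ℝ) (n : ℕ) : TodaFun := fun x =>
  Complex.I * (((if 2 ≤ n then Real.exp (y (n - 1) - x n) else 0)
    - if n < N then Real.exp (x n - y n) else 0 : ℝ) : ℂ)

theorem hasDerivAt_update_apply (x : ℕ → ℝ) (n k : ℕ) :
    HasDerivAt (fun t => Function.update x n t k) (if k = n then 1 else 0) (x n) := by
  by_cases h : k = n
  · subst h; simpa using hasDerivAt_id' (x k)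
  · simpa [h] using hasDerivAt_const (x n) (x k)

theorem sum_Icc_ite_add_one_eq {M : Type*} [AddCommMonoid M] (N n : ℕ) (hn : n ≤ N)
    (g : ℕ → M) :
    (∑ k ∈ Finset.Icc 1 (N - 1), if k + 1 = n then g k else 0)
      = if 2 ≤ n then g (n - 1) else 0 := by
  split_ifs with h
  · rw [Finset.sum_eq_single_of_mem (n - 1) (by simp only [Finset.mem_Icc]; omega),
      if_pos (by omega)]
    intro k _ hk
    rw [if_neg (by omega)]
  · exact Finset.sum_eq_zero fun k hk => if_neg (by simp only [Finset.mem_Icc] at hk; omega)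

theorem hasDerivAt_LamKer_potential_update (N : ℕ) (y x : ℕ → ℝ) (n : ℕ) (hn : 1 ≤ n)
    (hnN : n ≤ N) :
    HasDerivAt (fun t => ∑ k ∈ Finset.Icc 1 (N - 1),
        (Real.exp (y k - Function.update x n t (k + 1)) + Real.exp (Function.update x n t k - y k)))
      ((if n < N then Real.exp (x n - y n) else 0)
        - if 2 ≤ n then Real.exp (y (n - 1) - x n) else 0) (x n) := by
  refine (HasDerivAt.fun_sum fun k (_ : k ∈ Finset.Icc 1 (N - 1)) =>
    ((hasDerivAt_update_apply x n (k + 1)).const_sub (y k)).exp.add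
      ((hasDerivAt_update_apply x n k).sub_const (y k)).exp).congr_deriv ?_
  simp only [Function.update_eq_self, mul_neg, mul_ite, mul_one, mul_zero,
    Finset.sum_add_distrib, Finset.sum_neg_distrib, Finset.sum_ite_eq',
    sum_Icc_ite_add_one_eq N n hnN]
  have hmem : n ∈ Finset.Icc 1 (N - 1) ↔ n < N := by simp only [Finset.mem_Icc]; omega
  rw [if_congr hmem rfl rfl, Nat.sub_add_cancel hn]
  ring

theorem hasDerivAt_LamKer_update_s12 (hbar : ℝ) (N : ℕ) (u : ℂ) (y x : ℕ → ℝ) (n : ℕ)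
    (hn : 1 ≤ n) (hnN : n ≤ N) :
    HasDerivAt (fun t => LamKer hbar N u y (Function.update x n t))
      (Complex.I / hbar * (u - lamKerCoeff N y n x) * LamKer hbar N u y x) (x n) := by
  have hlin := HasDerivAt.fun_sum fun k (_ : k ∈ Finset.Icc 1 N) => hasDerivAt_update_apply x n k
  rw [Finset.sum_ite_eq', if_pos (Finset.mem_Icc.2 ⟨hn, hnN⟩)] at hlin
  have h := ((((hlin.sub_const (∑ k ∈ Finset.Icc 1 (N - 1), y k)).ofReal_comp).const_mul
    (Complex.I * u / hbar)).sub
      (((hasDerivAt_LamKer_potential_update N y x n hn hnN).const_mul (1 / hbar)).ofReal_comp)).cexp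
  refine h.congr_deriv ?_
  simp only [Pi.sub_apply, Function.update_eq_self, LamKer, lamKerCoeff]
  push_cast
  ring_nf
  rw [Complex.I_sq]
  ring

theorem lamKerCoeff_update_of_ne (N : ℕ) (y x : ℕ → ℝ) {k j : ℕ} (hkj : k ≠ j) (t : ℝ) :
    lamKerCoeff N y k (Function.update x j t) = lamKerCoeff N y k x := by
  simp only [lamKerCoeff, Function.update_of_ne hkj]

theorem LamKer_eigen (hbar : ℝ) (hbar0 : hbar ≠ 0) (N : ℕ) (u : ℂ) (y : ℕ → ℝ) (n : ℕ)
    (hn : 1 ≤ n) (hnN : n ≤ N) (x : ℕ → ℝ) :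
    u * LamKer hbar N u y x - pOp hbar n (LamKer hbar N u y) x
      = lamKerCoeff N y n x * LamKer hbar N u y x := by
  have hbarC : (hbar : ℂ) ≠ 0 := Complex.ofReal_ne_zero.2 hbar0
  rw [pOp, (hasDerivAt_LamKer_update_s12 hbar N u y x n hn hnN).deriv]
  field_simp
  ring_nf
  rw [Complex.I_sq]
  ring

def lamShiftFactor (n : ℕ) (y x : ℕ → ℝ) : ℝ :=
  Real.exp ((∑ k ∈ Finset.Icc 1 (n - 1), y k) - ∑ k ∈ Finset.Icc 1 n, x k)

theorem lamShiftFactor_one (y x : ℕ → ℝ) : lamShiftFactor 1 y x = Real.exp (-x 1) := by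
  simp [lamShiftFactor]

theorem lamShiftFactor_succ (y x : ℕ → ℝ) {n : ℕ} (hn : 1 ≤ n) :
    lamShiftFactor (n + 1) y x = lamShiftFactor n y x * Real.exp (y n - x (n + 1)) := by
  obtain ⟨m, rfl⟩ : ∃ m, n = m + 1 := ⟨n - 1, by omega⟩
  simp only [lamShiftFactor, Nat.add_sub_cancel, Finset.sum_Icc_succ_top (by omega : 1 ≤ m + 1),
    Finset.sum_Icc_succ_top (by omega : 1 ≤ m + 1 + 1), ← Real.exp_add]
  ring_nf

theorem LamKer_add_I_mul (hbar : ℝ) (hbar0 : hbar ≠ 0) (N : ℕ) (u : ℂ) (y x : ℕ → ℝ) :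
    LamKer hbar N (u + Complex.I * hbar) y x = lamShiftFactor N y x * LamKer hbar N u y x := by
  have hbarC : (hbar : ℂ) ≠ 0 := Complex.ofReal_ne_zero.2 hbar0
  simp only [LamKer, lamShiftFactor, Complex.ofReal_exp, ← Complex.exp_add]
  congr 1
  push_cast
  field_simp
  ring_nf
  rw [Complex.I_sq]
  ring

theorem laxCoeff_lamKerCoeff_invariant (N : ℕ) (y x : ℕ → ℝ) :
    ∀ n, 1 ≤ n → n ≤ N →
      Complex.I * (laxCoeff (lamKerCoeff N y) x n).1
        + (if n < N then Real.exp (-y n) else 0 : ℝ) * (laxCoeff (lamKerCoeff N y) x n).2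
        = Complex.I ^ n * lamShiftFactor n y x := by
  intro n hn
  induction n, hn using Nat.le_induction with
  | base =>
    intro _
    simp [laxCoeff, lamShiftFactor_one]
  | succ n hn ih =>
    intro hnN
    have ih := ih (by omega)
    rw [if_pos (by omega)] at ih
    have hx : Real.exp (-x (n + 1)) = Real.exp (y n - x (n + 1)) * Real.exp (-y n) := by
      rw [← Real.exp_add]; ring_nf
    have hxy :
        Real.exp (x (n + 1) - y (n + 1)) = Real.exp (-y (n + 1)) * Real.exp (x (n + 1)) := by
      rw [← Real.exp_add]; ring_nf
    simp only [laxCoeff, lamKerCoeff, lamShiftFactor_succ y x hn, if_pos (by omega : 2 ≤ n + 1),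
      Nat.add_sub_cancel, pow_succ]
    split_ifs
    · simp only [Complex.ofReal_mul, Complex.ofReal_sub, hx, hxy]
      linear_combination Complex.I * Real.exp (y n - x (n + 1)) * ih
        - Real.exp (-y (n + 1)) * Real.exp (x (n + 1)) * (laxCoeff (lamKerCoeff N y) x n).1
          * Complex.I_sq
    · simp only [Complex.ofReal_mul, Complex.ofReal_sub, Complex.ofReal_zero, hx]
      linear_combination Complex.I * Real.exp (y n - x (n + 1)) * ih

theorem laxCoeff_lamKerCoeff_fst (N : ℕ) (hN : 1 ≤ N) (y x : ℕ → ℝ) :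
    (laxCoeff (lamKerCoeff N y) x N).1 = Complex.I ^ (N - 1) * lamShiftFactor N y x := by
  obtain ⟨M, rfl⟩ : ∃ M, N = M + 1 := ⟨N - 1, by omega⟩
  have h := laxCoeff_lamKerCoeff_invariant (M + 1) y x (M + 1) hN le_rfl
  rw [if_neg (lt_irrefl _), Complex.ofReal_zero, zero_mul, add_zero, pow_succ', mul_assoc] at h
  rw [Nat.add_sub_cancel]
  exact mul_left_cancel₀ Complex.I_ne_zero h

theorem Bop_shifts_LamKer (hbar : ℝ) (hh : 0 < hbar) (u : ℂ) (N : ℕ) (hN : 2 ≤ N)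
    (y : ℕ → ℝ) :
    ∀ x : ℕ → ℝ,
      Bop hbar u N (LamKer hbar N u y) x
        = Complex.I ^ (N - 1) * LamKer hbar N (u + Complex.I * hbar) y x := by
  intro x
  have hB := (Bop_Dop_eq_laxCoeff_mul hbar u N (LamKer hbar N u y)
    (fun n hn hnN => LamKer_eigen hbar hh.ne' N u y n hn hnN)
    (fun k j hkj x t => lamKerCoeff_update_of_ne N y x hkj.ne t) N le_rfl x).1
  rw [hB, laxCoeff_lamKerCoeff_fst N (by omega), LamKer_add_I_mul hbar hh.ne']
  ring

end
end
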